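/- arXiv:2405.09505 — 6 statements merged into one kernel-verified Lean document; each statement's English description precedes it below -/
import Mathlib

section
/- Let F ∈ ℂ[x_1,…,x_r] be a smooth homogeneous polynomial of degree d ≥ 3, where r ≥ 2. Fix positive integers r_1,…,r_m with r_1 + ⋯ + r_m = r, where 1 ≤ m ≤ r. Let N be a subgroup of Aut(F) each of whose elements is a block-scalar diagonal matrix diag(λ_1 I_{r_1}, λ_2 I_{r_2}, …, λ_m I_{r_m}) with λ_1,…,λ_m ∈ ℂ^×. Then N is finite of order |N| ≤ d^m. -/
open MvPolynomial

/-- The action of a matrix on a multivariate polynomial: `A(F) = F(∑ a₁ᵢxᵢ, …, ∑ aᵣᵢxᵢ)`. -/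
noncomputable def matAct {r : ℕ} (A : Matrix (Fin r) (Fin r) ℂ) (F : MvPolynomial (Fin r) ℂ) :
    MvPolynomial (Fin r) ℂ :=
  MvPolynomial.bind₁ (fun i => ∑ j, MvPolynomial.C (A i j) * MvPolynomial.X j) F

lemma matAct_one {r : ℕ} (F : MvPolynomial (Fin r) ℂ) : matAct 1 F = F := by
  have : (fun i : Fin r => ∑ j, MvPolynomial.C ((1 : Matrix (Fin r) (Fin r) ℂ) i j)
      * MvPolynomial.X j) = MvPolynomial.X := by
    funext i
    simp [Matrix.one_apply, apply_ite (MvPolynomial.C (σ := Fin r) (R := ℂ)), ite_mul]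
  rw [matAct, this, MvPolynomial.bind₁_X_left]
  rfl

lemma matAct_mul {r : ℕ} (A B : Matrix (Fin r) (Fin r) ℂ) (F : MvPolynomial (Fin r) ℂ) :
    matAct (A * B) F = matAct B (matAct A F) := by
  unfold matAct
  rw [MvPolynomial.bind₁_bind₁]
  have h : (fun i : Fin r => (bind₁ fun i => ∑ j, C (B i j) * X j) (∑ j, C (A i j) * X j))
      = fun i : Fin r => ∑ j, C ((A * B) i j) * X j := by
    funext i
    rw [map_sum]
    simp only [map_mul, bind₁_C_right, bind₁_X_right, algebraMap_eq, Matrix.mul_apply,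
      Finset.mul_sum, map_sum, Finset.sum_mul, C_mul]
    rw [Finset.sum_comm]
    simp [mul_assoc]
  rw [h]

/-- The automorphism group of a form, as a subgroup of `GL`. -/
noncomputable def formAut {r : ℕ} (F : MvPolynomial (Fin r) ℂ) : Subgroup (GL (Fin r) ℂ) where
  carrier := {A | matAct (A : Matrix (Fin r) (Fin r) ℂ) F = F}
  one_mem' := by simpa using matAct_one F
  mul_mem' := by
    intro A B hA hB
    simp only [Set.mem_setOf_eq] at *
    rw [Units.val_mul, matAct_mul, hA, hB]
  inv_mem' := by
    intro A hA
    simp only [Set.mem_setOf_eq] at *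
    conv_lhs => rw [← hA]
    rw [← matAct_mul, Units.mul_inv, matAct_one]

/-- `F` is a smooth form: the origin is the only common zero of all partial derivatives. -/
def IsSmoothForm {r : ℕ} (F : MvPolynomial (Fin r) ℂ) : Prop :=
  ∀ x : Fin r → ℂ, (∀ i, MvPolynomial.eval x (MvPolynomial.pderiv i F) = 0) → x = 0

/-- Two forms are isomorphic if they are in the same `GL`-orbit. -/
def FormIso {r : ℕ} (F G : MvPolynomial (Fin r) ℂ) : Prop :=
  ∃ A : GL (Fin r) ℂ, matAct (A : Matrix (Fin r) (Fin r) ℂ) F = G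

/-- The Fermat form of degree `d` in `r` variables. -/
noncomputable def fermatForm (r d : ℕ) : MvPolynomial (Fin r) ℂ :=
  ∑ i, MvPolynomial.X i ^ d

/-!
A diagonal automorphism `diag v` of `F` multiplies the coefficient of `x^s` by `v^s`, so `v^s = 1`
for every monomial of `F`. Smoothness at the coordinate point `eᵢ` puts some `xᵢ^(d-1) xⱼ` into `F`,
hence `vᵢ^(d-1) vⱼ = 1`. For block-scalar `v` this becomes a system `λₖ^e λ_{τ k} = 1`, `e = d - 1`,
in the `m` block values. Its solutions are counted by peeling off either a point `s` outside the
image of `τ` (then `λₛ` is an `e`-th root of `λ_{τ s}⁻¹`: at most `e` choices), or, when `τ` is a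
permutation, a cycle of length `l` (then `λ` on the cycle is determined by one root of unity of
order dividing `(-e)^l - 1`: at most `(e+1)^l` choices). Altogether there are at most `d^m`.
-/

open Set Function Finsupp

theorem pow_natAbs_eq_one₀ {G₀ : Type*} [GroupWithZero G₀] {a : G₀} {n : ℤ} :
    a ^ n.natAbs = 1 ↔ a ^ n = 1 := by
  cases n <;> simp

theorem Int.natAbs_neg_pow_sub_one_le (e : ℕ) {l : ℕ} (hl : l ≠ 0) :
    ((-(e : ℤ)) ^ l - 1).natAbs ≤ (e + 1) ^ l :=
  calc ((-(e : ℤ)) ^ l - 1).natAbs ≤ ((-(e : ℤ)) ^ l).natAbs + (1 : ℤ).natAbs := natAbs_sub_le _ _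
    _ = e ^ l + 1 ^ l := by simp [Int.natAbs_pow]
    _ ≤ (e + 1) ^ l := pow_add_pow_le (Nat.zero_le _) zero_le_one hl

theorem Int.natAbs_neg_pow_sub_one_ne_zero {e : ℕ} (he : 2 ≤ e) {l : ℕ} (hl : l ≠ 0) :
    ((-(e : ℤ)) ^ l - 1).natAbs ≠ 0 := by
  intro h
  have h1 : ((-(e : ℤ)) ^ l).natAbs = 1 := by rw [show (-(e : ℤ)) ^ l = 1 by omega]; rfl
  rw [Int.natAbs_pow, Int.natAbs_neg, Int.natAbs_natCast] at h1
  exact (Nat.one_lt_pow hl (by omega)).ne' h1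

theorem encard_setOf_pow_eq_one_le {R : Type*} [CommRing R] [IsDomain R] {M : ℕ} (hM : M ≠ 0) :
    {z : R | z ^ M = 1}.encard ≤ M := by
  classical
  have : {z : R | z ^ M = 1} = ↑(Polynomial.nthRootsFinset M (1 : R)) := by
    ext z; simp [Polynomial.mem_nthRootsFinset (Nat.pos_of_ne_zero hM)]
  rw [this, encard_coe_eq_coe_finsetCard, Nat.cast_le, Polynomial.nthRootsFinset_def]
  exact (Multiset.toFinset_card_le _).trans (Polynomial.card_nthRoots M 1)

theorem Function.minimalPeriod_le_ncard_range_iterate {α : Type*} [Finite α] (f : α → α) (x : α) :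
    minimalPeriod f x ≤ (range (f^[·] x)).ncard :=
  calc minimalPeriod f x = ((f^[·] x) '' Iio (minimalPeriod f x)).ncard := by
        rw [iterate_injOn_Iio_minimalPeriod.ncard_image, ncard_Iio_nat]
    _ ≤ (range (f^[·] x)).ncard := ncard_le_ncard (image_subset_range _ _)

theorem Function.Injective.mapsTo_compl_range_iterate {α : Type*} {f : α → α} (hf : Injective f)
    {x : α} (hx : x ∈ periodicPts f) : MapsTo f (range (f^[·] x))ᶜ (range (f^[·] x))ᶜ := by
  rintro y hy ⟨n, hn⟩
  have hper : f^[n] x = f (f^[n + minimalPeriod f x - 1] x) := by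
    rw [← iterate_succ_apply' f, Nat.succ_eq_add_one,
      Nat.sub_add_cancel (by have := minimalPeriod_pos_of_mem_periodicPts hx; omega),
      iterate_add_apply, iterate_minimalPeriod]
  exact hy ⟨_, hf (hper.symm.trans hn)⟩

def monomialSolutions (K : Type*) {α : Type*} [Monoid K] (e : ℕ) (τ : α → α) : Set (α → K) :=
  {v | ∀ k, v k ^ e * v (τ k) = 1}

namespace monomialSolutions

variable {K α : Type*} {e : ℕ} {τ : α → α} {v : α → K}

theorem apply_ne_zero [MonoidWithZero K] [Nontrivial K] (he : e ≠ 0)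
    (hv : v ∈ monomialSolutions K e τ) (k : α) : v k ≠ 0 :=
  fun h => by simpa [h, zero_pow he] using hv k

theorem apply_iterate_eq_zpow [DivisionMonoid K] (hv : v ∈ monomialSolutions K e τ) (k : α)
    (n : ℕ) : v (τ^[n] k) = v k ^ ((-(e : ℤ)) ^ n) := by
  induction n with
  | zero => simp
  | succ n ih =>
    rw [iterate_succ_apply', eq_inv_of_mul_eq_one_right (hv _), ih, pow_succ, zpow_mul,
      zpow_neg, zpow_natCast]

theorem restrict_mem [Monoid K] {O : Set α} (hO : MapsTo τ Oᶜ Oᶜ)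
    (hv : v ∈ monomialSolutions K e τ) :
    (fun x : ↥Oᶜ => v x) ∈ monomialSolutions K e (hO.restrict τ Oᶜ Oᶜ) :=
  fun x => hv x

theorem encard_le_mul_of_injOn [Field K] {O : Set α} (hO : MapsTo τ Oᶜ Oᶜ) {M : ℕ} (hM : M ≠ 0)
    (g : (α → K) → K) (hg : ∀ v ∈ monomialSolutions K e τ, g v ^ M = 1)
    (hinj : ∀ v ∈ monomialSolutions K e τ, ∀ w ∈ monomialSolutions K e τ,
      g v = g w → EqOn v w Oᶜ → v = w) :
    (monomialSolutions K e τ).encard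
      ≤ M * (monomialSolutions K e (hO.restrict τ Oᶜ Oᶜ)).encard :=
  calc (monomialSolutions K e τ).encard
      ≤ ({z : K | z ^ M = 1} ×ˢ monomialSolutions K e (hO.restrict τ Oᶜ Oᶜ)).encard :=
        encard_le_encard_of_injOn (f := fun v => (g v, fun x : ↥Oᶜ => v x))
          (fun v hv => ⟨hg v hv, restrict_mem hO hv⟩)
          (fun v hv w hw h => hinj v hv w hw (congrArg Prod.fst h)
            (fun x hx => congrFun (congrArg Prod.snd h) ⟨x, hx⟩))
    _ ≤ M * (monomialSolutions K e (hO.restrict τ Oᶜ Oᶜ)).encard := by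
        rw [encard_prod]; gcongr; exact encard_setOf_pow_eq_one_le hM

theorem encard_le_of_notMem_range [Field K] [IsAlgClosed K] (he : e ≠ 0) {s : α} (hs : s ∉ range τ)
    (hO : MapsTo τ {s}ᶜ {s}ᶜ) :
    (monomialSolutions K e τ).encard
      ≤ e * (monomialSolutions K e (hO.restrict τ {s}ᶜ {s}ᶜ)).encard := by
  choose root hroot using fun c : K => IsAlgClosed.exists_pow_nat_eq c (Nat.pos_of_ne_zero he)
  refine encard_le_mul_of_injOn hO he (fun v => v s * root (v (τ s))) ?_ ?_
  · intro v hv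
    rw [mul_pow, hroot]
    exact hv s
  · intro v hv w hw hvw hoff
    have hτs : v (τ s) = w (τ s) := hoff fun h => hs ⟨s, h⟩
    have hroot_ne : root (v (τ s)) ≠ 0 := fun h =>
      apply_ne_zero he hv (τ s) (by rw [← hroot (v (τ s)), h, zero_pow he])
    funext x
    by_cases hx : x = s
    · subst hx
      rw [← hτs] at hvw
      exact mul_right_cancel₀ hroot_ne hvw
    · exact hoff hx

theorem encard_le_of_mem_periodicPts [Field K] [Finite α] (he : 2 ≤ e) {k : α}
    (hk : k ∈ periodicPts τ) (hO : MapsTo τ (range (τ^[·] k))ᶜ (range (τ^[·] k))ᶜ) :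
    (monomialSolutions K e τ).encard ≤ (e + 1) ^ (range (τ^[·] k)).ncard *
      (monomialSolutions K e (hO.restrict τ (range (τ^[·] k))ᶜ (range (τ^[·] k))ᶜ)).encard := by
  have hl : minimalPeriod τ k ≠ 0 := (minimalPeriod_pos_of_mem_periodicPts hk).ne'
  calc (monomialSolutions K e τ).encard
      ≤ ((-(e : ℤ)) ^ minimalPeriod τ k - 1).natAbs * _ := by
        refine encard_le_mul_of_injOn hO (Int.natAbs_neg_pow_sub_one_ne_zero he hl)
          (fun v => v k) ?_ ?_
        · intro v hv
          rw [pow_natAbs_eq_one₀, zpow_sub₀ (apply_ne_zero (by omega) hv k), zpow_one,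
            ← apply_iterate_eq_zpow hv, iterate_minimalPeriod,
            div_self (apply_ne_zero (by omega) hv k)]
        · rintro v hv w hw (hvw : v k = w k) hoff
          funext x
          by_cases hx : x ∈ range (τ^[·] k)
          · obtain ⟨n, rfl⟩ := hx
            rw [apply_iterate_eq_zpow hv, apply_iterate_eq_zpow hw, hvw]
          · exact hoff hx
    _ ≤ (e + 1) ^ (range (τ^[·] k)).ncard * _ := by
        gcongr
        exact_mod_cast (Int.natAbs_neg_pow_sub_one_le e hl).trans
          (Nat.pow_le_pow_right (Nat.succ_pos e) (minimalPeriod_le_ncard_range_iterate τ k))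

theorem exists_encard_le_mul [Field K] [IsAlgClosed K] [Finite α] [Nonempty α] (he : 2 ≤ e)
    (τ : α → α) :
    ∃ O : Set α, O.Nonempty ∧ ∃ hO : MapsTo τ Oᶜ Oᶜ, (monomialSolutions K e τ).encard ≤
      (e + 1) ^ O.ncard * (monomialSolutions K e (hO.restrict τ Oᶜ Oᶜ)).encard := by
  by_cases hτ : Surjective τ
  · have hinj : Injective τ := Finite.injective_iff_surjective.mpr hτ
    obtain ⟨k⟩ := ‹Nonempty α›
    have hk := hinj.mem_periodicPts k
    exact ⟨range (τ^[·] k), ⟨k, 0, rfl⟩, hinj.mapsTo_compl_range_iterate hk,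
      encard_le_of_mem_periodicPts he hk _⟩
  · obtain ⟨s, hs⟩ := not_forall.mp hτ
    have hO : MapsTo τ {s}ᶜ {s}ᶜ := fun x _ hx => hs ⟨x, hx⟩
    refine ⟨{s}, singleton_nonempty s, hO, ?_⟩
    calc (monomialSolutions K e τ).encard ≤ e * _ := encard_le_of_notMem_range (by omega) hs hO
      _ ≤ (e + 1) ^ ({s} : Set α).ncard * _ := by rw [ncard_singleton, pow_one]; gcongr; simp

end monomialSolutions

theorem encard_monomialSolutions_le (K : Type*) {α : Type*} [Field K] [IsAlgClosed K] [Finite α]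
    {e : ℕ} (he : 2 ≤ e) (τ : α → α) :
    (monomialSolutions K e τ).encard ≤ (e + 1) ^ Nat.card α := by
  induction h : Nat.card α using Nat.strong_induction_on generalizing α with
  | _ n ih =>
  cases isEmpty_or_nonempty α
  · rw [← h, Nat.card_of_isEmpty, pow_zero, encard_le_one_iff_subsingleton]
    exact subsingleton_of_subsingleton
  obtain ⟨O, hne, hO, hle⟩ := monomialSolutions.exists_encard_le_mul (K := K) he τ
  have hcard : O.ncard + Nat.card ↥Oᶜ = n := by
    rw [Nat.card_coe_set_eq, ncard_add_ncard_compl, h]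
  have hpos : 0 < O.ncard := hne.ncard_pos
  calc (monomialSolutions K e τ).encard
      ≤ (e + 1) ^ O.ncard * (monomialSolutions K e (hO.restrict τ Oᶜ Oᶜ)).encard := hle
    _ ≤ (e + 1) ^ O.ncard * (e + 1) ^ Nat.card ↥Oᶜ := by gcongr; exact ih _ (by omega) _ rfl
    _ = (e + 1) ^ n := by rw [← pow_add, hcard]

theorem MvPolynomial.bind₁_C_mul_X_monomial {σ R : Type*} [CommSemiring R] (g : σ → R)
    (u : σ →₀ ℕ) (a : R) :
    bind₁ (fun i => C (g i) * X i) (monomial u a) = monomial u (a * u.prod fun i n => g i ^ n) := by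
  simp only [bind₁_monomial, mul_pow, Finset.prod_mul_distrib, ← map_pow, ← map_prod, Finsupp.prod]
  rw [monomial_eq, map_mul, Finsupp.prod]
  ring

theorem MvPolynomial.coeff_bind₁_C_mul_X {σ R : Type*} [CommSemiring R] (g : σ → R)
    (p : MvPolynomial σ R) (s : σ →₀ ℕ) :
    coeff s (bind₁ (fun i => C (g i) * X i) p) = (s.prod fun i n => g i ^ n) * coeff s p := by
  classical
  induction p using MvPolynomial.induction_on' with
  | add p q hp hq => simp [hp, hq, mul_add]
  | monomial u a =>
    rw [bind₁_C_mul_X_monomial, coeff_monomial, coeff_monomial]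
    split_ifs with h
    · rw [h, mul_comm]
    · rw [mul_zero]

theorem MvPolynomial.eval_piSingle_one_of_isHomogeneous {σ R : Type*} [CommSemiring R]
    [DecidableEq σ] {p : MvPolynomial σ R} {n : ℕ} (hp : p.IsHomogeneous n) (i : σ) :
    eval (Pi.single i 1) p = coeff (single i n) p := by
  rw [eval_eq, Finset.sum_eq_single (single i n)]
  · rw [Finset.prod_eq_one, mul_one]
    intro k hk
    rw [Finset.mem_singleton.mp (support_single_subset hk), Pi.single_eq_same, one_pow]
  · intro s hs hne
    obtain ⟨k, hk, hki⟩ : ∃ k ∈ s.support, k ≠ i := by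
      by_contra! h
      have hs_eq : s = single i (s i) := support_subset_singleton.mp fun k hk =>
        Finset.mem_singleton.mpr (h k hk)
      have hdeg := hp (mem_support_iff.mp hs)
      rw [hs_eq] at hdeg hne
      rw [weight_single, Pi.one_apply, smul_eq_mul, mul_one] at hdeg
      exact hne (by rw [hdeg])
    refine mul_eq_zero_of_right _ (Finset.prod_eq_zero hk ?_)
    rw [Pi.single_eq_of_ne hki, zero_pow (Finsupp.mem_support_iff.mp hk)]
  · intro h
    rw [notMem_support_iff.mp h, zero_mul]

theorem IsSmoothForm.exists_coeff_ne_zero {r d : ℕ} {F : MvPolynomial (Fin r) ℂ}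
    (hsm : IsSmoothForm F) (hF : F.IsHomogeneous d) (i : Fin r) :
    ∃ j, coeff (single i (d - 1) + single j 1) F ≠ 0 := by
  by_contra! h
  refine Pi.single_ne_zero_iff.mpr one_ne_zero (hsm (Pi.single i 1) fun j => ?_)
  rw [eval_piSingle_one_of_isHomogeneous hF.pderiv, coeff_pderiv, h, zero_mul]

theorem matAct_diagonal {r : ℕ} (v : Fin r → ℂ) (F : MvPolynomial (Fin r) ℂ) :
    matAct (Matrix.diagonal v) F = bind₁ (fun i => C (v i) * X i) F := by
  simp [matAct, Matrix.diagonal_apply, apply_ite C, ite_mul]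

theorem prod_pow_eq_one_of_matAct_diagonal_eq_self {r : ℕ} {v : Fin r → ℂ}
    {F : MvPolynomial (Fin r) ℂ} (hF : matAct (Matrix.diagonal v) F = F) {s : Fin r →₀ ℕ}
    (hs : coeff s F ≠ 0) : (s.prod fun i n => v i ^ n) = 1 := by
  have h := congrArg (coeff s) hF
  rw [matAct_diagonal, coeff_bind₁_C_mul_X] at h
  exact mul_right_cancel₀ hs (h.trans (one_mul _).symm)

theorem pow_mul_eq_one_of_matAct_diagonal_eq_self {r : ℕ} {v : Fin r → ℂ}
    {F : MvPolynomial (Fin r) ℂ} (hF : matAct (Matrix.diagonal v) F = F) {i j : Fin r} {a : ℕ}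
    (hc : coeff (single i a + single j 1) F ≠ 0) : v i ^ a * v j = 1 := by
  rw [← prod_pow_eq_one_of_matAct_diagonal_eq_self hF hc, prod_add_index' (fun _ => pow_zero _)
    (fun _ _ _ => pow_add _ _ _)]
  simp [prod_single_index]

theorem block_scalar_subgroup_card_le_general
    (r d m : ℕ) (hd : 3 ≤ d)
    (ρ : Fin m → ℕ) (hρ : ∀ k, 0 < ρ k)
    (b : Fin r → Fin m)
    (hfib : ∀ k, (Finset.univ.filter fun i : Fin r => b i = k).card = ρ k)
    (F : MvPolynomial (Fin r) ℂ) (hhom : F.IsHomogeneous d) (hsm : IsSmoothForm F)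
    (N : Subgroup (GL (Fin r) ℂ)) (hN : N ≤ formAut F)
    (hblock : ∀ A ∈ N, ∃ lam : Fin m → ℂ,
      (A : Matrix (Fin r) (Fin r) ℂ) = Matrix.diagonal fun i => lam (b i)) :
    (N : Set (GL (Fin r) ℂ)).Finite ∧ Nat.card N ≤ d ^ m := by
  have hb : Surjective b := fun k => by
    obtain ⟨i, hi⟩ := Finset.card_pos.mp ((hfib k).symm ▸ hρ k)
    exact ⟨i, (Finset.mem_filter.mp hi).2⟩
  choose j hj using hsm.exists_coeff_ne_zero hhom
  let Λ : GL (Fin r) ℂ → Fin m → ℂ := fun A k =>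
    (A : Matrix (Fin r) (Fin r) ℂ) (surjInv hb k) (surjInv hb k)
  have hΛ : ∀ A ∈ N, (A : Matrix (Fin r) (Fin r) ℂ) = Matrix.diagonal fun i => Λ A (b i) := by
    intro A hA
    obtain ⟨lam, hlam⟩ := hblock A hA
    have : Λ A = lam := funext fun k => by simp [Λ, hlam, surjInv_eq hb]
    rw [this, hlam]
  have hmaps : MapsTo Λ N (monomialSolutions ℂ (d - 1) fun k => b (j (surjInv hb k))) := by
    intro A hA k
    have hA' : matAct (Matrix.diagonal fun i => Λ A (b i)) F = F := hΛ A hA ▸ hN hA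
    simpa [surjInv_eq hb] using pow_mul_eq_one_of_matAct_diagonal_eq_self hA' (hj (surjInv hb k))
  have hinj : InjOn Λ N := fun A hA B hB h => Units.ext (by rw [hΛ A hA, hΛ B hB, h])
  have hcard := (encard_le_encard_of_injOn hmaps hinj).trans
    (encard_monomialSolutions_le ℂ (by omega : 2 ≤ d - 1) _)
  rw [Nat.card_fin, show ((d - 1 : ℕ) : ℕ∞) + 1 = d by norm_cast; omega] at hcard
  exact encard_le_coe_iff_finite_ncard_le.mp (by exact_mod_cast hcard)

/-- an abelian subgroup of `Aut(F)` consisting of block-scalar diagonal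
matrices with `m` blocks has order at most `d^m`. -/
theorem block_scalar_subgroup_card_le
    (r d m : ℕ) (hr : 2 ≤ r) (hd : 3 ≤ d) (hm1 : 1 ≤ m) (hmr : m ≤ r)
    (ρ : Fin m → ℕ) (hρ : ∀ k, 0 < ρ k) (hsum : ∑ k, ρ k = r)
    (b : Fin r → Fin m) (hb : Monotone b)
    (hfib : ∀ k, (Finset.univ.filter fun i : Fin r => b i = k).card = ρ k)
    (F : MvPolynomial (Fin r) ℂ) (hhom : F.IsHomogeneous d) (hsm : IsSmoothForm F)
    (N : Subgroup (GL (Fin r) ℂ)) (hN : N ≤ formAut F)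
    (hblock : ∀ A ∈ N, ∃ lam : Fin m → ℂ,
      (A : Matrix (Fin r) (Fin r) ℂ) = Matrix.diagonal fun i => lam (b i)) :
    (N : Set (GL (Fin r) ℂ)).Finite ∧ Nat.card N ≤ d ^ m :=
  block_scalar_subgroup_card_le_general r d m hd ρ hρ b hfib F hhom hsm N hN hblock
end

section
/- Let F ∈ ℂ[x_1,…,x_{k+a}] be a smooth homogeneous polynomial of degree d ≥ 3 with k ≥ 2 and a > 0. Write F = F_1 + F_2, where F_1 ∈ ℂ[x_1,…,x_k] and F_2 lies in the ideal of ℂ[x_1,…,x_{k+a}] generated by x_{k+1},…,x_{k+a}. Suppose F_1, regarded as a polynomial in x_1,…,x_k, is not smooth. Then F_2 does not lie in the square of the ideal generated by x_{k+1},…,x_{k+a}. In particular, there exist nonnegative integers d_1,…,d_k and an index 1 ≤ j ≤ a such that the monomial x_1^{d_1}⋯x_k^{d_k}·x_{k+j} occurs with nonzero coefficient in F. -/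
open MvPolynomial

/-- if `F = F₁ + F₂` is smooth with `F₁` in the first `k` variables not
smooth and `F₂` in the ideal `(x_{k+1},…,x_{k+a})`, then `F₂` is not in the square of
that ideal; in particular some monomial `x₁^{d₁}⋯x_k^{d_k}·x_{k+j}` occurs in `F`. -/
theorem smooth_decomposition_monomial
    (k a d : ℕ) (hk : 2 ≤ k) (ha : 0 < a) (hd : 3 ≤ d)
    (F : MvPolynomial (Fin (k + a)) ℂ) (hhom : F.IsHomogeneous d) (hsm : IsSmoothForm F)
    (F₁ : MvPolynomial (Fin k) ℂ) (F₂ : MvPolynomial (Fin (k + a)) ℂ)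
    (hF : F = MvPolynomial.rename (Fin.castAdd a) F₁ + F₂)
    (hF₂ : F₂ ∈ Ideal.span (Set.range fun j : Fin a =>
      (MvPolynomial.X (Fin.natAdd k j) : MvPolynomial (Fin (k + a)) ℂ)))
    (hF₁ : ¬ IsSmoothForm F₁) :
    F₂ ∉ (Ideal.span (Set.range fun j : Fin a =>
      (MvPolynomial.X (Fin.natAdd k j) : MvPolynomial (Fin (k + a)) ℂ))) ^ 2 ∧
    ∃ (dv : Fin k → ℕ) (j : Fin a),
      MvPolynomial.coeff (Finsupp.equivFunOnFinite.symm
        (Fin.addCases dv fun j' => if j' = j then 1 else 0)) F ≠ 0 := by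
  classical
  set I : Ideal (MvPolynomial (Fin (k + a)) ℂ) := Ideal.span (Set.range fun j : Fin a =>
      (MvPolynomial.X (Fin.natAdd k j) : MvPolynomial (Fin (k + a)) ℂ)) with hIdef
  have hrange : (Set.range fun j : Fin a =>
      (MvPolynomial.X (Fin.natAdd k j) : MvPolynomial (Fin (k + a)) ℂ))
      = MvPolynomial.X '' (Set.range (Fin.natAdd k)) := by
    rw [show (fun j : Fin a => (MvPolynomial.X (Fin.natAdd k j) :
        MvPolynomial (Fin (k + a)) ℂ)) = MvPolynomial.X ∘ Fin.natAdd k from rfl,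
      Set.range_comp]
  rw [IsSmoothForm] at hF₁
  push_neg at hF₁
  obtain ⟨y, hy1, hy2⟩ := hF₁
  set z : Fin (k + a) → ℂ := Fin.addCases y (fun _ => 0) with hzdef
  have hz0 : ∀ j : Fin a, z (Fin.natAdd k j) = 0 := fun j => Fin.addCases_right j
  have hzc : ∀ i : Fin k, z (Fin.castAdd a i) = y i := fun i => Fin.addCases_left i
  have hinj : Function.Injective (Fin.castAdd a : Fin k → Fin (k + a)) := by
    intro i j h
    exact Fin.ext (by simpa using congrArg Fin.val h)
  have hevalI : ∀ g ∈ I, MvPolynomial.eval z g = 0 := by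
    intro g hg
    refine Submodule.span_induction ?_ ?_ ?_ ?_ hg
    · rintro _ ⟨j, rfl⟩; simp [hz0]
    · simp
    · intro p q _ _ hp hq; simp [hp, hq]
    · intro r p _ hp; simp [smul_eq_mul, hp]
  have h1 : F₂ ∉ I ^ 2 := by
    intro hc
    rw [sq] at hc
    have hpd : ∀ i, MvPolynomial.pderiv i F₂ ∈ I := by
      intro i
      refine Submodule.mul_induction_on hc ?_ ?_
      · intro p hp q hq
        rw [MvPolynomial.pderiv_mul]
        exact I.add_mem (I.mul_mem_left _ hq) (I.mul_mem_right _ hp)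
      · intro x y hx hy
        rw [map_add]
        exact I.add_mem hx hy
    have hzeq : z = 0 := by
      apply hsm
      intro i
      rw [hF, map_add, map_add, hevalI _ (hpd i), add_zero]
      induction i using Fin.addCases with
      | left i =>
        rw [MvPolynomial.pderiv_rename hinj, MvPolynomial.eval_rename,
          show z ∘ Fin.castAdd a = y from funext hzc]
        exact hy1 i
      | right j =>
        have hzero : MvPolynomial.pderiv (Fin.natAdd k j)
            (MvPolynomial.rename (Fin.castAdd a) F₁) = 0 := by
          apply MvPolynomial.pderiv_eq_zero_of_notMem_vars
          intro hv
          obtain ⟨i, -, hi⟩ := MvPolynomial.mem_vars_rename _ _ hv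
          have := congrArg Fin.val hi
          simp at this
          omega
        rw [hzero, map_zero]
    obtain ⟨i₀, hi₀⟩ := Function.ne_iff.mp hy2
    apply hi₀
    rw [← hzc i₀, hzeq]
    rfl
  have hmono : ∀ (n : ℕ) (m : Fin (k + a) →₀ ℕ) (c : ℂ),
      n ≤ ∑ j : Fin a, m (Fin.natAdd k j) →
      (MvPolynomial.monomial m c : MvPolynomial (Fin (k + a)) ℂ) ∈ I ^ n := by
    intro n
    induction n with
    | zero => intro m c _; simp
    | succ n ih =>
      intro m c hn
      have hex : ∃ j : Fin a, m (Fin.natAdd k j) ≠ 0 := by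
        by_contra h
        push_neg at h
        simp [h] at hn
      obtain ⟨j, hj⟩ := hex
      set m' : Fin (k + a) →₀ ℕ := m - Finsupp.single (Fin.natAdd k j) 1 with hm'def
      have hsum : m = Finsupp.single (Fin.natAdd k j) 1 + m' := by
        ext i
        rcases eq_or_ne i (Fin.natAdd k j) with h | h
        · subst h
          simp only [hm'def, Finsupp.add_apply, Finsupp.tsub_apply, Finsupp.single_eq_same]
          omega
        · simp [hm'def, Finsupp.single_apply, Ne.symm h, Finsupp.tsub_apply]
      have hsingle : ∀ j' : Fin a,
          (Finsupp.single (Fin.natAdd k j) 1 : Fin (k + a) →₀ ℕ) (Fin.natAdd k j')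
          = if j' = j then 1 else 0 := by
        intro j'
        rcases eq_or_ne j' j with rfl | h
        · simp
        · have : Fin.natAdd k j ≠ Fin.natAdd k j' := by
            intro hcon
            exact h (Fin.ext (by simpa using congrArg Fin.val hcon)).symm
          simp [Finsupp.single_apply, this, h]
      have hsum' : n ≤ ∑ j' : Fin a, m' (Fin.natAdd k j') := by
        have h1' : ∑ j' : Fin a, m (Fin.natAdd k j')
            = 1 + ∑ j' : Fin a, m' (Fin.natAdd k j') := by
          conv_lhs => rw [hsum]
          simp only [Finsupp.add_apply]
          rw [Finset.sum_add_distrib]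
          congr 1
          simp [hsingle]
        omega
      have hmon : (MvPolynomial.monomial m c : MvPolynomial (Fin (k + a)) ℂ)
          = MvPolynomial.X (Fin.natAdd k j) * MvPolynomial.monomial m' c := by
        rw [MvPolynomial.X, MvPolynomial.monomial_mul, one_mul, ← hsum]
      rw [hmon, pow_succ']
      exact Ideal.mul_mem_mul (Ideal.subset_span ⟨j, rfl⟩) (ih m' c hsum')
  refine ⟨h1, ?_⟩
  have hex : ∃ m ∈ F₂.support, (∑ j : Fin a, m (Fin.natAdd k j)) < 2 := by
    by_contra h
    push_neg at h
    apply h1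
    rw [← F₂.support_sum_monomial_coeff]
    exact Submodule.sum_mem _ fun m hm => hmono 2 m _ (h m hm)
  obtain ⟨m, hmem, hlt⟩ := hex
  have hge : ∃ i ∈ Set.range (Fin.natAdd k : Fin a → Fin (k + a)), m i ≠ 0 := by
    rw [hIdef, hrange] at hF₂
    exact MvPolynomial.mem_ideal_span_X_image.mp hF₂ m hmem
  obtain ⟨_, ⟨j₀, rfl⟩, hj₀⟩ := hge
  have hle : m (Fin.natAdd k j₀) ≤ ∑ j : Fin a, m (Fin.natAdd k j) :=
    Finset.single_le_sum (f := fun j => m (Fin.natAdd k j))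
      (fun _ _ => Nat.zero_le _) (Finset.mem_univ j₀)
  have hsum1 : ∑ j : Fin a, m (Fin.natAdd k j) = 1 := by omega
  have hone : m (Fin.natAdd k j₀) = 1 := by omega
  have hzero : ∀ j' : Fin a, j' ≠ j₀ → m (Fin.natAdd k j') = 0 := by
    intro j' hne
    have h2' : m (Fin.natAdd k j') + m (Fin.natAdd k j₀)
        ≤ ∑ j : Fin a, m (Fin.natAdd k j) := by
      rw [← Finset.sum_erase_add Finset.univ _ (Finset.mem_univ j₀)]
      have : m (Fin.natAdd k j') ≤ ∑ x ∈ Finset.univ.erase j₀, m (Fin.natAdd k x) :=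
        Finset.single_le_sum (f := fun j => m (Fin.natAdd k j))
          (fun _ _ => Nat.zero_le _) (Finset.mem_erase.mpr ⟨hne, Finset.mem_univ j'⟩)
      omega
    omega
  refine ⟨fun i => m (Fin.castAdd a i), j₀, ?_⟩
  have hmeq : (Finsupp.equivFunOnFinite.symm (Fin.addCases (fun i => m (Fin.castAdd a i))
      (fun j' => if j' = j₀ then 1 else 0)) : Fin (k + a) →₀ ℕ) = m := by
    ext i
    rw [show ((Finsupp.equivFunOnFinite.symm (Fin.addCases
        (fun i => m (Fin.castAdd a i)) (fun j' => if j' = j₀ then 1 else 0))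
        : Fin (k + a) →₀ ℕ) i) = Fin.addCases (fun i => m (Fin.castAdd a i))
        (fun j' => if j' = j₀ then 1 else 0) i from rfl]
    induction i using Fin.addCases with
    | left i => rw [Fin.addCases_left]
    | right j' =>
      rw [Fin.addCases_right]
      rcases eq_or_ne j' j₀ with rfl | h
      · simp [hone]
      · simp [h, hzero j' h]
  rw [hmeq, hF, MvPolynomial.coeff_add]
  have hc1 : MvPolynomial.coeff m (MvPolynomial.rename (Fin.castAdd a) F₁) = 0 := by
    apply MvPolynomial.coeff_rename_eq_zero
    intro u hu
    exfalso
    have h0 : Finsupp.mapDomain (Fin.castAdd a) u (Fin.natAdd k j₀) = 0 := by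
      apply Finsupp.mapDomain_notin_range
      rintro ⟨i, hi⟩
      have := congrArg Fin.val hi
      simp at this
      omega
    rw [hu] at h0
    omega
  rw [hc1, zero_add]
  exact MvPolynomial.mem_support_iff.mp hmem
end

section
/- Let F ∈ ℂ[x_1,…,x_{n+2}] be a homogeneous polynomial of degree d ≥ 3 with n ≥ 1, and let G be a finite subgroup of Aut(F). Let n_1, n_2 ≥ 1 with n_1 + n_2 = n+2, let V_1 = span(e_1,…,e_{n_1}) and V_2 = span(e_{n_1+1},…,e_{n_1+n_2}) (where e_1,…,e_{n+2} is the standard basis of ℂ^{n+2}), and suppose V_1 and V_2 are stable under every element of G and V_2 is irreducible as a G-module. Let F^{(d-1,1)} denote the sum of all terms of F of the form c·m·x_{n_1+j} with m a monomial of degree d−1 in x_1,…,x_{n_1} and 1 ≤ j ≤ n_2. If F^{(d-1,1)} ≠ 0, then F^{(d-1,1)} = F′_1·x_{n_1+1} + ⋯ + F′_{n_2}·x_{n_1+n_2}, where F′_1,…,F′_{n_2} ∈ ℂ[x_1,…,x_{n_1}] are ℂ-linearly independent homogeneous polynomials of degree d−1. -/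
open MvPolynomial

/-- The sum of the terms of `F` of bidegree `(e₁, e₂)` with respect to the splitting of
the variables into the first `n₁` ones and the remaining ones. -/
noncomputable def bidegComponent {r : ℕ} (n₁ e₁ e₂ : ℕ) (F : MvPolynomial (Fin r) ℂ) :
    MvPolynomial (Fin r) ℂ :=
  ∑ m ∈ F.support,
    if (∑ i ∈ Finset.univ.filter (fun i : Fin r => (i : ℕ) < n₁), m i) = e₁
        ∧ (∑ i ∈ Finset.univ.filter (fun i : Fin r => n₁ ≤ (i : ℕ)), m i) = e₂
      then MvPolynomial.monomial m (MvPolynomial.coeff m F) else 0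

/-!
Elements of `G` are block diagonal, so they commute with taking bidegree components and
`H = F^{(d-1,1)}` is `G`-invariant. Euler's identity in the second group of variables gives
`H = ∑ⱼ (∂H/∂x_{n₁+j}) x_{n₁+j}`, so `F'ⱼ = ∂H/∂x_{n₁+j}`. By the chain rule the directional
derivative `v ↦ ∑ᵢ vᵢ ∂H/∂xᵢ` is `G`-equivariant, hence its kernel meets `V₂` in a `G`-stable
subspace. That subspace is not all of `V₂` because `H ≠ 0`, so by irreducibility it is zero,
which is the linear independence of the `F'ⱼ`.
-/

namespace MvPolynomial

variable {R σ τ M N : Type*} [CommSemiring R]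

theorem IsWeightedHomogeneous.comp_addMonoidHom [AddCommMonoid M] [AddCommMonoid N]
    {w : σ → M} {φ : MvPolynomial σ R} {m : M} (h : φ.IsWeightedHomogeneous w m) (f : M →+ N) :
    φ.IsWeightedHomogeneous (f ∘ w) (f m) := by
  intro d hd
  rw [← h hd, Finsupp.weight_apply, Finsupp.weight_apply, map_finsuppSum]
  simp

theorem IsWeightedHomogeneous.bind₁ [AddCommMonoid M] {w : σ → M} {w' : τ → M}
    {f : σ → MvPolynomial τ R} (hf : ∀ i, (f i).IsWeightedHomogeneous w' (w i))
    {p : MvPolynomial σ R} {m : M} (hp : p.IsWeightedHomogeneous w m) :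
    (bind₁ f p).IsWeightedHomogeneous w' m := by
  rw [← mem_weightedHomogeneousSubmodule, weightedHomogeneousSubmodule_eq_finsupp_supported,
    AddMonoidAlgebra.supported_eq_span_single] at hp
  refine Submodule.span_induction ?_ ?_ (fun p q _ _ hp hq ↦ ?_) (fun r p _ h ↦ ?_) hp
  · rintro _ ⟨d, rfl, rfl⟩
    change (MvPolynomial.bind₁ f (monomial d 1)).IsWeightedHomogeneous w' _
    rw [bind₁_monomial, Finsupp.weight_apply, Finsupp.sum, ← zero_add (∑ _ ∈ _, _)]
    exact (isWeightedHomogeneous_C _ _).mul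
      (IsWeightedHomogeneous.prod _ _ _ fun i _ => (hf i).pow _)
  · rw [map_zero]; apply isWeightedHomogeneous_zero
  · rw [map_add]; exact hp.add hq
  · rw [map_smul]; exact (weightedHomogeneousSubmodule ..).smul_mem _ h

theorem weightedHomogeneousComponent_linearMap [AddCommMonoid M] {w : σ → M} {w' : τ → M}
    (f : MvPolynomial σ R →ₗ[R] MvPolynomial τ R)
    (hf : ∀ p m, p.IsWeightedHomogeneous w m → (f p).IsWeightedHomogeneous w' m)
    (m : M) (p : MvPolynomial σ R) :
    weightedHomogeneousComponent w' m (f p) = f (weightedHomogeneousComponent w m p) := by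
  classical
  conv_lhs => rw [p.as_sum, map_sum, map_sum]
  rw [weightedHomogeneousComponent_apply, map_sum, Finset.sum_filter]
  refine Finset.sum_congr rfl fun d _ => ?_
  have hd := hf _ _ (isWeightedHomogeneous_monomial w d (coeff d p) rfl)
  split_ifs with h
  · rw [← h, hd.weightedHomogeneousComponent_same]
  · exact hd.weightedHomogeneousComponent_ne m (Ne.symm h)

theorem pderiv_bind₁ [Fintype σ] (f : σ → MvPolynomial τ R) (p : MvPolynomial σ R) (i : τ) :
    pderiv i (bind₁ f p) = ∑ k, bind₁ f (pderiv k p) * pderiv i (f k) := by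
  classical
  induction p using MvPolynomial.induction_on with
  | C a => simp
  | add p q hp hq => simp [hp, hq, add_mul, Finset.sum_add_distrib]
  | mul_X p n hp =>
    simp [Derivation.leibniz, hp, pderiv_X, Pi.single_apply, apply_ite (bind₁ f), add_mul,
      Finset.sum_add_distrib, Finset.mul_sum, mul_assoc]

end MvPolynomial

section MatAct

open scoped Matrix

variable {r : ℕ}

theorem matAct_injective (A : GL (Fin r) ℂ) :
    Function.Injective (matAct (A : Matrix (Fin r) (Fin r) ℂ)) :=
  Function.LeftInverse.injective (g := matAct ↑A⁻¹) fun p => by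
    rw [← matAct_mul, ← Units.val_mul, mul_inv_cancel, Units.val_one, matAct_one]

theorem pderiv_matAct (A : Matrix (Fin r) (Fin r) ℂ) (p : MvPolynomial (Fin r) ℂ) (i : Fin r) :
    pderiv i (matAct A p) = ∑ k, A k i • matAct A (pderiv k p) := by
  classical
  simp [matAct, pderiv_bind₁, pderiv_X, Pi.single_apply, smul_eq_C_mul, mul_comm]

theorem matAct_linearCombination_pderiv_mulVec (A : Matrix (Fin r) (Fin r) ℂ)
    (H : MvPolynomial (Fin r) ℂ) (v : Fin r → ℂ) :
    matAct A (Fintype.linearCombination ℂ (fun i => pderiv i H) (A *ᵥ v))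
      = Fintype.linearCombination ℂ (fun i => pderiv i (matAct A H)) v := by
  simp only [Fintype.linearCombination_apply, pderiv_matAct, Finset.smul_sum, smul_smul,
    Matrix.mulVec, dotProduct, Finset.sum_smul]
  rw [matAct, map_sum, Finset.sum_comm]
  simp [matAct, mul_comm]

theorem mulVec_mem_ker_linearCombination_pderiv (A : GL (Fin r) ℂ) {H : MvPolynomial (Fin r) ℂ}
    (hH : matAct (A : Matrix (Fin r) (Fin r) ℂ) H = H) {v : Fin r → ℂ}
    (hv : v ∈ LinearMap.ker (Fintype.linearCombination ℂ fun i => pderiv i H)) :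
    (A : Matrix (Fin r) (Fin r) ℂ) *ᵥ v
      ∈ LinearMap.ker (Fintype.linearCombination ℂ fun i => pderiv i H) := by
  rw [LinearMap.mem_ker] at hv ⊢
  apply matAct_injective A
  rw [matAct_linearCombination_pderiv_mulVec, hH, hv, matAct, map_zero]

theorem matAct_weightedHomogeneousComponent {M : Type*} [AddCommMonoid M] {w : Fin r → M}
    {A : Matrix (Fin r) (Fin r) ℂ} (hA : ∀ i j, w i ≠ w j → A i j = 0) (e : M)
    (p : MvPolynomial (Fin r) ℂ) :
    weightedHomogeneousComponent w e (matAct A p)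
      = matAct A (weightedHomogeneousComponent w e p) := by
  refine weightedHomogeneousComponent_linearMap (bind₁ _).toLinearMap (fun q m hq => ?_) e p
  refine hq.bind₁ fun i => IsWeightedHomogeneous.sum _ _ _ fun j _ => ?_
  by_cases h : w i = w j
  · simpa [h] using (isWeightedHomogeneous_X ℂ w j).C_mul (A i j)
  · simp [hA i j h, isWeightedHomogeneous_zero]

end MatAct

theorem apply_eq_zero_of_mem_span_single {ι R : Type*} [DecidableEq ι] [Semiring R] {s : Set ι}
    {v : ι → R} (hv : v ∈ Submodule.span R ((fun i => Pi.single i 1) '' s)) {i : ι} (hi : i ∉ s) :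
    v i = 0 := by
  have hle : Submodule.span R ((fun i => Pi.single i (1 : R)) '' s)
      ≤ LinearMap.ker (LinearMap.proj i) :=
    Submodule.span_le.mpr <| by
      rintro _ ⟨j, hj, rfl⟩
      simp [(ne_of_mem_of_not_mem hj hi).symm]
  exact hle hv

open scoped Matrix in
theorem Matrix.apply_eq_zero_of_mulVec_mem_span_single {ι R : Type*} [Fintype ι] [DecidableEq ι]
    [CommSemiring R] {A : Matrix ι ι R} {s : Set ι}
    (hA : ∀ v ∈ Submodule.span R ((fun i => Pi.single i 1) '' s),
      A *ᵥ v ∈ Submodule.span R ((fun i => Pi.single i 1) '' s))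
    {i j : ι} (hj : j ∈ s) (hi : i ∉ s) : A i j = 0 := by
  simpa [Matrix.mulVec_single_one] using
    apply_eq_zero_of_mem_span_single (hA _ (Submodule.subset_span ⟨j, hj, rfl⟩)) hi

theorem linearIndependent_apply_single_of_disjoint_ker {κ ι K M : Type*} [Finite ι]
    [DecidableEq ι] [Field K] [AddCommGroup M] [Module K M] {f : (ι → K) →ₗ[K] M}
    {V : Submodule K (ι → K)} {e : κ → ι} (he : Function.Injective e)
    (hV : ∀ j, Pi.single (e j) 1 ∈ V) (hdisj : Disjoint V (LinearMap.ker f)) :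
    LinearIndependent K fun j => f (Pi.single (e j) 1) := by
  have hsingle : LinearIndependent K fun j => (Pi.single (e j) (1 : K) : ι → K) := by
    simpa only [Function.comp_def, Pi.basisFun_apply] using
      (Pi.basisFun K ι).linearIndependent.comp e he
  exact hsingle.map
    (hdisj.mono_left (Submodule.span_le.mpr (Set.range_subset_iff.mpr hV)))

section Bidegree

variable {r : ℕ}

def bidegWeight (n₁ : ℕ) (i : Fin r) : ℕ × ℕ := if (i : ℕ) < n₁ then (1, 0) else (0, 1)

theorem bidegComponent_eq_weightedHomogeneousComponent (n₁ e₁ e₂ : ℕ)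
    (F : MvPolynomial (Fin r) ℂ) :
    bidegComponent n₁ e₁ e₂ F = weightedHomogeneousComponent (bidegWeight n₁) (e₁, e₂) F := by
  classical
  rw [weightedHomogeneousComponent_apply, bidegComponent, Finset.sum_filter]
  refine Finset.sum_congr rfl fun m _ => if_congr ?_ rfl rfl
  simp [Finsupp.weight_eq_sum, bidegWeight, Prod.ext_iff, Finset.sum_filter, Prod.fst_sum,
    Prod.snd_sum, apply_ite Prod.fst, apply_ite Prod.snd]
  intro
  simp_rw [← not_lt, ite_not]

theorem bidegComponent_isWeightedHomogeneous (n₁ e₁ e₂ : ℕ) (F : MvPolynomial (Fin r) ℂ) :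
    (bidegComponent n₁ e₁ e₂ F).IsWeightedHomogeneous (bidegWeight n₁) (e₁, e₂) := by
  rw [bidegComponent_eq_weightedHomogeneousComponent]
  exact weightedHomogeneousComponent_isWeightedHomogeneous _ _

theorem apply_eq_zero_of_bidegWeight_ne {n₁ : ℕ} {A : Matrix (Fin r) (Fin r) ℂ}
    (h₁ : ∀ v ∈ Submodule.span ℂ ((fun i : Fin r => Pi.single i (1 : ℂ)) '' {i | (i : ℕ) < n₁}),
      A.mulVec v ∈ Submodule.span ℂ ((fun i : Fin r => Pi.single i (1 : ℂ)) '' {i | (i : ℕ) < n₁}))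
    (h₂ : ∀ v ∈ Submodule.span ℂ ((fun i : Fin r => Pi.single i (1 : ℂ)) '' {i | n₁ ≤ (i : ℕ)}),
      A.mulVec v ∈ Submodule.span ℂ ((fun i : Fin r => Pi.single i (1 : ℂ)) '' {i | n₁ ≤ (i : ℕ)}))
    {i j : Fin r} (h : bidegWeight n₁ i ≠ bidegWeight n₁ j) : A i j = 0 := by
  by_cases hi : (i : ℕ) < n₁ <;> by_cases hj : (j : ℕ) < n₁
  · simp [bidegWeight, hi, hj] at h
  · exact Matrix.apply_eq_zero_of_mulVec_mem_span_single h₂ (not_lt.mp hj) (not_le.mpr hi)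
  · exact Matrix.apply_eq_zero_of_mulVec_mem_span_single h₁ hj hi
  · simp [bidegWeight, hi, hj] at h

theorem matAct_bidegComponent {n₁ : ℕ} {A : Matrix (Fin r) (Fin r) ℂ}
    (h₁ : ∀ v ∈ Submodule.span ℂ ((fun i : Fin r => Pi.single i (1 : ℂ)) '' {i | (i : ℕ) < n₁}),
      A.mulVec v ∈ Submodule.span ℂ ((fun i : Fin r => Pi.single i (1 : ℂ)) '' {i | (i : ℕ) < n₁}))
    (h₂ : ∀ v ∈ Submodule.span ℂ ((fun i : Fin r => Pi.single i (1 : ℂ)) '' {i | n₁ ≤ (i : ℕ)}),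
      A.mulVec v ∈ Submodule.span ℂ ((fun i : Fin r => Pi.single i (1 : ℂ)) '' {i | n₁ ≤ (i : ℕ)}))
    (e₁ e₂ : ℕ) (F : MvPolynomial (Fin r) ℂ) :
    matAct A (bidegComponent n₁ e₁ e₂ F) = bidegComponent n₁ e₁ e₂ (matAct A F) := by
  simp only [bidegComponent_eq_weightedHomogeneousComponent]
  exact (matAct_weightedHomogeneousComponent
    (fun _ _ => apply_eq_zero_of_bidegWeight_ne h₁ h₂) _ _).symm

variable {R : Type*} [CommSemiring R] {n₁ a b : ℕ} {p : MvPolynomial (Fin r) R}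

theorem MvPolynomial.IsWeightedHomogeneous.isHomogeneous_of_bidegWeight
    (h : p.IsWeightedHomogeneous (bidegWeight n₁) (a, b)) : p.IsHomogeneous (a + b) := by
  have hw : (AddMonoidHom.fst ℕ ℕ + AddMonoidHom.snd ℕ ℕ) ∘ bidegWeight n₁ = (1 : Fin r → ℕ) := by
    funext i
    by_cases hi : (i : ℕ) < n₁ <;> simp [bidegWeight, hi]
  exact (by simpa [hw] using h.comp_addMonoidHom (AddMonoidHom.fst ℕ ℕ + AddMonoidHom.snd ℕ ℕ) :
    IsWeightedHomogeneous 1 p (a + b))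

theorem MvPolynomial.IsWeightedHomogeneous.lt_of_bidegWeight
    (h : p.IsWeightedHomogeneous (bidegWeight n₁) (a, 0)) {m : Fin r →₀ ℕ} (hm : m ∈ p.support)
    {i : Fin r} (hi : m i ≠ 0) : (i : ℕ) < n₁ := by
  by_contra hni
  have hweight := h.comp_addMonoidHom (AddMonoidHom.snd ℕ ℕ) (mem_support_iff.mp hm)
  have := Finsupp.le_weight_of_ne_zero' (AddMonoidHom.snd ℕ ℕ ∘ bidegWeight n₁) hi
  simp only [AddMonoidHom.coe_snd] at hweight this
  simp [hweight, bidegWeight, hni] at this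

theorem eq_sum_pderiv_mul_X {N n₂ e : ℕ} (hsum : n₁ + n₂ = N) {H : MvPolynomial (Fin N) R}
    (hH : H.IsWeightedHomogeneous (bidegWeight n₁) (e, 1)) :
    H = ∑ j : Fin n₂, pderiv (Fin.cast hsum (Fin.natAdd n₁ j)) H
      * X (Fin.cast hsum (Fin.natAdd n₁ j)) := by
  subst hsum
  have euler := (hH.comp_addMonoidHom (AddMonoidHom.snd ℕ ℕ)).sum_weight_X_mul_pderiv
  simp only [AddMonoidHom.coe_snd, Function.comp_apply, one_smul] at euler
  conv_lhs => rw [← euler, Fin.sum_univ_add]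
  simp [bidegWeight, mul_comm]

end Bidegree

theorem component_linear_independent_general
    (n d : ℕ)
    (F : MvPolynomial (Fin (n + 2)) ℂ)
    (G : Subgroup (GL (Fin (n + 2)) ℂ)) (hG : G ≤ formAut F)
    (n₁ n₂ : ℕ) (hsum : n₁ + n₂ = n + 2)
    (V₁ V₂ : Submodule ℂ (Fin (n + 2) → ℂ))
    (hV₁ : V₁ = Submodule.span ℂ
      ((fun i : Fin (n + 2) => Pi.single i (1 : ℂ)) '' {i | (i : ℕ) < n₁}))
    (hV₂ : V₂ = Submodule.span ℂ
      ((fun i : Fin (n + 2) => Pi.single i (1 : ℂ)) '' {i | n₁ ≤ (i : ℕ)}))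
    (hstab₁ : ∀ A ∈ G, ∀ v ∈ V₁, Matrix.mulVec (A : Matrix (Fin (n + 2)) (Fin (n + 2)) ℂ) v ∈ V₁)
    (hstab₂ : ∀ A ∈ G, ∀ v ∈ V₂, Matrix.mulVec (A : Matrix (Fin (n + 2)) (Fin (n + 2)) ℂ) v ∈ V₂)
    (hirr₂ : ∀ W : Submodule ℂ (Fin (n + 2) → ℂ), W ≤ V₂ →
      (∀ A ∈ G, ∀ v ∈ W, Matrix.mulVec (A : Matrix (Fin (n + 2)) (Fin (n + 2)) ℂ) v ∈ W) →
      W = ⊥ ∨ W = V₂)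
    (hne : bidegComponent n₁ (d - 1) 1 F ≠ 0) :
    ∃ F' : Fin n₂ → MvPolynomial (Fin (n + 2)) ℂ,
      (∀ j, (F' j).IsHomogeneous (d - 1)) ∧
      (∀ j, ∀ m ∈ (F' j).support, ∀ i : Fin (n + 2), m i ≠ 0 → (i : ℕ) < n₁) ∧
      LinearIndependent ℂ F' ∧
      bidegComponent n₁ (d - 1) 1 F
        = ∑ j : Fin n₂, F' j * MvPolynomial.X (Fin.cast hsum (Fin.natAdd n₁ j)) := by
  classical
  set H := bidegComponent n₁ (d - 1) 1 F
  have hH : H.IsWeightedHomogeneous (bidegWeight n₁) (d - 1, 1) :=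
    bidegComponent_isWeightedHomogeneous _ _ _ F
  have hinv (A : GL (Fin (n + 2)) ℂ) (hA : A ∈ G) : matAct (A : Matrix _ _ ℂ) H = H := by
    rw [matAct_bidegComponent (hV₁ ▸ hstab₁ A hA) (hV₂ ▸ hstab₂ A hA), hG hA]
  set ι : Fin n₂ → Fin (n + 2) := fun j => Fin.cast hsum (Fin.natAdd n₁ j)
  have hsingle (j : Fin n₂) : Pi.single (ι j) (1 : ℂ) ∈ V₂ :=
    hV₂ ▸ Submodule.subset_span ⟨ι j, by simp [ι], rfl⟩
  set T := Fintype.linearCombination ℂ fun i => pderiv i H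
  have hT_single (j : Fin n₂) : T (Pi.single (ι j) 1) = pderiv (ι j) H := by
    simp [T, Fintype.linearCombination_apply_single]
  have hdecomp : H = ∑ j, pderiv (ι j) H * X (ι j) := eq_sum_pderiv_mul_X hsum hH
  have hW : V₂ ⊓ LinearMap.ker T = ⊥ := by
    refine (hirr₂ _ inf_le_left fun A hA v hv => ⟨hstab₂ A hA v hv.1,
      mulVec_mem_ker_linearCombination_pderiv A (hinv A hA) hv.2⟩).resolve_right fun hW => hne ?_
    rw [hdecomp]
    refine Finset.sum_eq_zero fun j _ => ?_
    have hj : Pi.single (ι j) 1 ∈ V₂ ⊓ LinearMap.ker T := by rw [hW]; exact hsingle j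
    rw [← hT_single, LinearMap.mem_ker.mp hj.2, zero_mul]
  have hF' (j : Fin n₂) : (pderiv (ι j) H).IsWeightedHomogeneous (bidegWeight n₁) (d - 1, 0) :=
    hH.pderiv (by simp [bidegWeight, ι])
  refine ⟨fun j => pderiv (ι j) H, fun j => (hF' j).isHomogeneous_of_bidegWeight,
    fun j m hm i hi => (hF' j).lt_of_bidegWeight hm hi, ?_, hdecomp⟩
  simpa only [hT_single] using linearIndependent_apply_single_of_disjoint_ker
    (show Function.Injective ι from (Fin.cast_injective hsum).comp (Fin.natAdd_injective _ _))
    hsingle (disjoint_iff.mpr hW)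

/-- the `(d-1,1)`-component of an invariant form, when nonzero, is a sum
`F′₁x_{n₁+1} + ⋯ + F′_{n₂}x_{n₁+n₂}` with linearly independent `F′_j` of degree `d-1`. -/
theorem component_linear_independent
    (n d : ℕ) (hn : 1 ≤ n) (hd : 3 ≤ d)
    (F : MvPolynomial (Fin (n + 2)) ℂ) (hhom : F.IsHomogeneous d)
    (G : Subgroup (GL (Fin (n + 2)) ℂ)) (hGfin : Finite G) (hG : G ≤ formAut F)
    (n₁ n₂ : ℕ) (hn₁ : 1 ≤ n₁) (hn₂ : 1 ≤ n₂) (hsum : n₁ + n₂ = n + 2)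
    (V₁ V₂ : Submodule ℂ (Fin (n + 2) → ℂ))
    (hV₁ : V₁ = Submodule.span ℂ
      ((fun i : Fin (n + 2) => Pi.single i (1 : ℂ)) '' {i | (i : ℕ) < n₁}))
    (hV₂ : V₂ = Submodule.span ℂ
      ((fun i : Fin (n + 2) => Pi.single i (1 : ℂ)) '' {i | n₁ ≤ (i : ℕ)}))
    (hstab₁ : ∀ A ∈ G, ∀ v ∈ V₁, Matrix.mulVec (A : Matrix (Fin (n + 2)) (Fin (n + 2)) ℂ) v ∈ V₁)
    (hstab₂ : ∀ A ∈ G, ∀ v ∈ V₂, Matrix.mulVec (A : Matrix (Fin (n + 2)) (Fin (n + 2)) ℂ) v ∈ V₂)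
    (hirr₂ : ∀ W : Submodule ℂ (Fin (n + 2) → ℂ), W ≤ V₂ →
      (∀ A ∈ G, ∀ v ∈ W, Matrix.mulVec (A : Matrix (Fin (n + 2)) (Fin (n + 2)) ℂ) v ∈ W) →
      W = ⊥ ∨ W = V₂)
    (hne : bidegComponent n₁ (d - 1) 1 F ≠ 0) :
    ∃ F' : Fin n₂ → MvPolynomial (Fin (n + 2)) ℂ,
      (∀ j, (F' j).IsHomogeneous (d - 1)) ∧
      (∀ j, ∀ m ∈ (F' j).support, ∀ i : Fin (n + 2), m i ≠ 0 → (i : ℕ) < n₁) ∧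
      LinearIndependent ℂ F' ∧
      bidegComponent n₁ (d - 1) 1 F
        = ∑ j : Fin n₂, F' j * MvPolynomial.X (Fin.cast hsum (Fin.natAdd n₁ j)) :=
  component_linear_independent_general n d F G hG n₁ n₂ hsum V₁ V₂ hV₁ hV₂ hstab₁ hstab₂ hirr₂ hne
end

section
/- Let l_1 and l_2 be subdegree sequences and let d ≥ 3 be an integer. Let l_1 + l_2 denote the subdegree sequence obtained by merging the entries of l_1 and l_2 (and reordering nonincreasingly). Then C(v(l_1+l_2), v(l_1)) · R(l_1+l_2, d) ≥ R(l_1,d)·R(l_2,d), where C(·,·) is the binomial coefficient and v denotes total degree. Equality occurs if and only if no positive integer occurs as an entry of both l_1 and l_2. -/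
/-- Collins' function `JC`: the maximal order of a finite primitive subgroup of
`PGL(r,ℂ)`. -/
def JC : ℕ → ℕ
  | 1 => 1
  | 2 => 60
  | 3 => 360
  | 4 => 25920
  | 5 => 25920
  | 6 => 6531840
  | 7 => 1451520
  | 8 => 348364800
  | 9 => 4199040
  | 12 => 448345497600
  | r => (r + 1).factorial

/-- A subdegree sequence, recorded as the multiset of its entries: it must be nonempty
and all entries must be positive. -/
def IsSubdegreeSeq (l : Multiset ℕ) : Prop := l ≠ 0 ∧ ∀ x ∈ l, 0 < x

/-- The Fermat-test ratio `R(l,d)`. -/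
def FTR (l : Multiset ℕ) (d : ℕ) : ℚ :=
  ((d ^ (Multiset.card l) * (l.map JC).prod
      * ∏ x ∈ l.toFinset, (l.count x).factorial : ℕ) : ℚ)
    / ((d ^ l.sum * l.sum.factorial : ℕ) : ℚ)

/-!
Write `R(l,d) = c(l,d) · Π_j k_j!`. The prefactor satisfies
`C(v₁ + v₂, v₁) · c(l₁ + l₂, d) = c(l₁, d) · c(l₂, d)`, since
`(v₁ + v₂)! = C(v₁ + v₂, v₁) · v₁! · v₂!` and all its other ingredients are multiplicative.
For the multiplicity factor, `(a + b)! = C(a + b, b) · a! · b!` for the two counts `a`, `b` of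
each value, and `C(a + b, b) = 1` exactly when `a = 0` or `b = 0`, i.e. when the value does not
occur in both sequences.
-/

open Finset Nat

lemma JC_pos (r : ℕ) : 0 < JC r := by
  unfold JC
  split <;> positivity

lemma Finset.prod_factorial_add {ι : Type*} (s : Finset ι) (f g : ι → ℕ) :
    ∏ i ∈ s, (f i + g i)! =
      (∏ i ∈ s, (f i + g i).choose (g i)) * ((∏ i ∈ s, (f i)!) * ∏ i ∈ s, (g i)!) := by
  simp only [← prod_mul_distrib, ← mul_assoc, add_choose_mul_factorial_mul_factorial]

def prodCountFactorial (l : Multiset ℕ) : ℕ := ∏ x ∈ l.toFinset, (l.count x)!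

lemma prodCountFactorial_eq_prod_of_subset {l : Multiset ℕ} {s : Finset ℕ}
    (hs : l.toFinset ⊆ s) : prodCountFactorial l = ∏ x ∈ s, (l.count x)! :=
  prod_subset hs fun x _ hx => by
    rw [Multiset.count_eq_zero.mpr (by simpa using hx), factorial_zero]

lemma prodCountFactorial_add (l₁ l₂ : Multiset ℕ) :
    prodCountFactorial (l₁ + l₂) =
      (∏ x ∈ (l₁ + l₂).toFinset, (l₁.count x + l₂.count x).choose (l₂.count x)) *
        (prodCountFactorial l₁ * prodCountFactorial l₂) := by
  have hsub₁ : l₁.toFinset ⊆ (l₁ + l₂).toFinset := by simp [Multiset.toFinset_add]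
  have hsub₂ : l₂.toFinset ⊆ (l₁ + l₂).toFinset := by simp [Multiset.toFinset_add]
  rw [prodCountFactorial_eq_prod_of_subset hsub₁, prodCountFactorial_eq_prod_of_subset hsub₂,
    ← prod_factorial_add, prodCountFactorial]
  simp only [Multiset.count_add]

lemma prodCountFactorial_pos (l : Multiset ℕ) : 0 < prodCountFactorial l :=
  prod_pos fun _ _ => factorial_pos _

lemma prodCountFactorial_mul_le (l₁ l₂ : Multiset ℕ) :
    prodCountFactorial l₁ * prodCountFactorial l₂ ≤ prodCountFactorial (l₁ + l₂) := by
  rw [prodCountFactorial_add]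
  exact le_mul_of_one_le_left' (one_le_iff_ne_zero.mpr
    (prod_ne_zero_iff.mpr fun _ _ => (choose_pos (le_add_left _ _)).ne'))

lemma prodCountFactorial_add_eq_iff (l₁ l₂ : Multiset ℕ) :
    prodCountFactorial (l₁ + l₂) = prodCountFactorial l₁ * prodCountFactorial l₂ ↔
      Disjoint l₁ l₂ := by
  have hpos := mul_pos (prodCountFactorial_pos l₁) (prodCountFactorial_pos l₂)
  rw [prodCountFactorial_add, Nat.mul_eq_right hpos.ne', prod_eq_one_iff,
    Multiset.disjoint_left]
  simp only [choose_eq_one_iff, Nat.add_eq_right, Multiset.mem_toFinset, Multiset.mem_add,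
    Multiset.count_eq_zero]
  grind

def ftrPrefactor (l : Multiset ℕ) (d : ℕ) : ℚ :=
  ((d ^ Multiset.card l * (l.map JC).prod : ℕ) : ℚ) / ((d ^ l.sum * l.sum ! : ℕ) : ℚ)

lemma FTR_eq_ftrPrefactor_mul (l : Multiset ℕ) (d : ℕ) :
    FTR l d = ftrPrefactor l d * prodCountFactorial l := by
  rw [FTR, ftrPrefactor, prodCountFactorial, Nat.cast_mul, div_mul_eq_mul_div]

lemma ftrPrefactor_pos (l : Multiset ℕ) {d : ℕ} (hd : 0 < d) : 0 < ftrPrefactor l d := by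
  have hJC : 0 < (l.map JC).prod :=
    Multiset.prod_pos fun _ hx => by
      obtain ⟨r, -, rfl⟩ := Multiset.mem_map.mp hx
      exact JC_pos r
  unfold ftrPrefactor
  positivity

lemma choose_mul_ftrPrefactor_add (l₁ l₂ : Multiset ℕ) (d : ℕ) :
    ((l₁ + l₂).sum.choose l₁.sum : ℚ) * ftrPrefactor (l₁ + l₂) d =
      ftrPrefactor l₁ d * ftrPrefactor l₂ d := by
  have hfact : ((l₁.sum + l₂.sum)! : ℚ) =
      (l₁.sum + l₂.sum).choose l₁.sum * l₁.sum ! * l₂.sum ! := by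
    have h := choose_mul_factorial_mul_factorial (le_add_right l₁.sum l₂.sum)
    rw [Nat.add_sub_cancel_left] at h
    exact_mod_cast h.symm
  have hchoose : ((l₁.sum + l₂.sum).choose l₁.sum : ℚ) ≠ 0 := by
    exact_mod_cast (choose_pos (le_add_right _ _)).ne'
  simp only [ftrPrefactor, Multiset.sum_add, Multiset.card_add, Multiset.map_add,
    Multiset.prod_add, Nat.cast_mul, Nat.cast_pow, hfact]
  field_simp
  ring

theorem FTR_merge_inequality_general
    (l₁ l₂ : Multiset ℕ) (d : ℕ) (hd : 3 ≤ d) :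
    FTR l₁ d * FTR l₂ d ≤ ((l₁ + l₂).sum.choose l₁.sum : ℚ) * FTR (l₁ + l₂) d ∧
    (((l₁ + l₂).sum.choose l₁.sum : ℚ) * FTR (l₁ + l₂) d = FTR l₁ d * FTR l₂ d ↔
      ∀ x, x ∈ l₁ → x ∉ l₂) := by
  have hpos : 0 < ftrPrefactor l₁ d * ftrPrefactor l₂ d :=
    mul_pos (ftrPrefactor_pos l₁ (by omega)) (ftrPrefactor_pos l₂ (by omega))
  have hmerge : ((l₁ + l₂).sum.choose l₁.sum : ℚ) * FTR (l₁ + l₂) d =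
      ftrPrefactor l₁ d * ftrPrefactor l₂ d * prodCountFactorial (l₁ + l₂) := by
    rw [FTR_eq_ftrPrefactor_mul, ← mul_assoc, choose_mul_ftrPrefactor_add]
  have hsplit : FTR l₁ d * FTR l₂ d = ftrPrefactor l₁ d * ftrPrefactor l₂ d *
      (prodCountFactorial l₁ * prodCountFactorial l₂ : ℕ) := by
    rw [FTR_eq_ftrPrefactor_mul, FTR_eq_ftrPrefactor_mul, Nat.cast_mul]
    ring
  rw [hmerge, hsplit, mul_le_mul_iff_right₀ hpos, mul_right_inj' hpos.ne', Nat.cast_le,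
    Nat.cast_inj, prodCountFactorial_add_eq_iff, Multiset.disjoint_left]
  exact ⟨prodCountFactorial_mul_le l₁ l₂, fun h x => h, fun h _ => h _⟩

/-- super-multiplicativity of the Fermat-test ratio with respect to
merging subdegree sequences, with equality exactly for disjoint entry sets. -/
theorem FTR_merge_inequality
    (l₁ l₂ : Multiset ℕ) (hl₁ : IsSubdegreeSeq l₁) (hl₂ : IsSubdegreeSeq l₂)
    (d : ℕ) (hd : 3 ≤ d) :
    FTR l₁ d * FTR l₂ d ≤ ((l₁ + l₂).sum.choose l₁.sum : ℚ) * FTR (l₁ + l₂) d ∧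
    (((l₁ + l₂).sum.choose l₁.sum : ℚ) * FTR (l₁ + l₂) d = FTR l₁ d * FTR l₂ d ↔
      ∀ x, x ∈ l₁ → x ∉ l₂) :=
  FTR_merge_inequality_general l₁ l₂ d hd
end

section
/- Let d ≥ 3 and m ≥ 1 be integers, and let l_1 be a subdegree sequence whose distinct entries are r_1 > r_2 > ⋯ > r_m with multiplicities k_1,…,k_m, such that r_i > 1 and R(r_i^{k_i}, d) ≥ 1 for every 1 ≤ i ≤ m (where r_i^{k_i} denotes the subdegree sequence consisting of k_i copies of r_i). Then R(l_1,d) ≤ R(l′_1,d), where: l′_1 = (4) if v(l_1) = 4 and d = 3; l′_1 consists of v(l_1)/2 copies of 2 if v(l_1) is even and (v(l_1),d) ≠ (4,3); and l′_1 consists of (v(l_1)−1)/2 copies of 2 if v(l_1) is odd. In particular, if v(l_1) ≥ 28, then R(l_1,d) < 1. -/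
/-!
Write `v` and `s` for the sum and the length of a sequence. Because `FTR l d` is `FTR l b` times
`(b / d) ^ (v - s)`, and entries `≥ 2` give `l₁` an excess `v - s` at least that of the
comparison sequence of `2`s, every comparison propagates from `d = 3` (from `d = 4` when
`v = 4`) to all larger `d`. Likewise `1 ≤ R(r^k, d)` implies `1 ≤ R(r^k, 3)`, that is
`3^(kr) (kr)! ≤ 3^k JC(r)^k k!`; together with `k! (r!)^k ≤ (kr)!` and
`k! (k+1)^(k(r-1)) ≤ (kr)!` this leaves finitely many pieces `(r, k)`: `r ∈ {2,3,4,5,6,8}`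
with `k` below `14, 4, 4, 2, 3, 2` respectively. The finitely many sequences built from
these pieces are checked directly.
-/

open Multiset
open scoped Nat

def DominatedByTwos (l : Multiset ℕ) (d : ℕ) : Prop :=
  ((l.sum = 4 ∧ d = 3) → FTR l d ≤ FTR {4} d) ∧
    ((Even l.sum ∧ ¬(l.sum = 4 ∧ d = 3)) →
      FTR l d ≤ FTR (Multiset.replicate (l.sum / 2) 2) d) ∧
    (Odd l.sum → FTR l d ≤ FTR (Multiset.replicate ((l.sum - 1) / 2) 2) d) ∧
    (28 ≤ l.sum → FTR l d < 1)

instance (l : Multiset ℕ) (d : ℕ) : Decidable (DominatedByTwos l d) := by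
  unfold DominatedByTwos; infer_instance

lemma FTR_nonneg (l : Multiset ℕ) (d : ℕ) : 0 ≤ FTR l d := by
  unfold FTR; positivity

lemma FTR_eq_mul_div_pow {l : Multiset ℕ} (hl : card l ≤ l.sum) {b d : ℕ} (hb : 0 < b)
    (hd : 0 < d) : FTR l d = FTR l b * ((b : ℚ) / d) ^ (l.sum - card l) := by
  obtain ⟨e, he⟩ := Nat.exists_eq_add_of_le hl
  unfold FTR
  rw [he, Nat.add_sub_cancel_left]
  push_cast
  rw [div_pow, pow_add, pow_add]
  field_simp

section Rescaling

variable {l l' : Multiset ℕ} {b d : ℕ}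

lemma FTR_anti (hl : card l ≤ l.sum) (hb : 0 < b) (hbd : b ≤ d) : FTR l d ≤ FTR l b := by
  rw [FTR_eq_mul_div_pow hl hb (hb.trans_le hbd)]
  refine mul_le_of_le_one_right (FTR_nonneg l b) (pow_le_one₀ (by positivity) ?_)
  exact div_le_one_of_le₀ (by exact_mod_cast hbd) (by positivity)

lemma FTR_le_FTR_of_excess_le (hl : card l ≤ l.sum) (hl' : card l' ≤ l'.sum)
    (hexc : l'.sum - card l' ≤ l.sum - card l) (hb : 0 < b) (hbd : b ≤ d)
    (h : FTR l b ≤ FTR l' b) : FTR l d ≤ FTR l' d := by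
  have hq₀ : 0 ≤ (b : ℚ) / d := by positivity
  have hq₁ : (b : ℚ) / d ≤ 1 := div_le_one_of_le₀ (by exact_mod_cast hbd) (by positivity)
  rw [FTR_eq_mul_div_pow hl hb (hb.trans_le hbd), FTR_eq_mul_div_pow hl' hb (hb.trans_le hbd)]
  calc FTR l b * ((b : ℚ) / d) ^ (l.sum - card l)
      ≤ FTR l' b * ((b : ℚ) / d) ^ (l.sum - card l) :=
        mul_le_mul_of_nonneg_right h (pow_nonneg hq₀ _)
    _ ≤ FTR l' b * ((b : ℚ) / d) ^ (l'.sum - card l') :=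
        mul_le_mul_of_nonneg_left (pow_le_pow_of_le_one hq₀ hq₁ hexc) (FTR_nonneg l' b)

end Rescaling

lemma card_replicate_le_sum {k r : ℕ} (hr : 0 < r) :
    card (replicate k r) ≤ (replicate k r).sum := by
  simpa using Nat.le_mul_of_pos_right k hr

lemma DominatedByTwos.of_three_of_four {l : Multiset ℕ} (hl : ∀ x ∈ l, 2 ≤ x)
    (h₃ : DominatedByTwos l 3) (h₄ : l.sum = 4 → DominatedByTwos l 4) {d : ℕ} (hd : 3 ≤ d) :
    DominatedByTwos l d := by
  have h₂ : card l * 2 ≤ l.sum := by simpa using card_nsmul_le_sum hl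
  have hpos : card l ≤ l.sum := by omega
  have htwos (m : ℕ) (hm : m ≤ l.sum - card l) : card (replicate m 2) ≤ (replicate m 2).sum ∧
      (replicate m 2).sum - card (replicate m 2) ≤ l.sum - card l := by
    simp only [card_replicate, sum_replicate, smul_eq_mul]; omega
  refine ⟨?_, ?_, ?_, fun h28 => (FTR_anti hpos (by norm_num) hd).trans_lt (h₃.2.2.2 h28)⟩
  · rintro ⟨hv, rfl⟩
    exact h₃.1 ⟨hv, rfl⟩
  · rintro ⟨hev, hne⟩
    obtain ⟨h₁, hexc⟩ := htwos (l.sum / 2) (by omega)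
    by_cases hv : l.sum = 4
    · exact FTR_le_FTR_of_excess_le hpos h₁ hexc (by norm_num) (by omega)
        ((h₄ hv).2.1 ⟨hev, by omega⟩)
    · exact FTR_le_FTR_of_excess_le hpos h₁ hexc (by norm_num) hd (h₃.2.1 ⟨hev, by omega⟩)
  · intro hodd
    obtain ⟨h₁, hexc⟩ := htwos ((l.sum - 1) / 2) (by omega)
    exact FTR_le_FTR_of_excess_le hpos h₁ hexc (by norm_num) hd (h₃.2.2.1 hodd)

def multiplicityBound : ℕ → ℕ
  | 2 => 14
  | 3 => 4
  | 4 => 4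
  | 5 => 2
  | 6 => 3
  | 8 => 2
  | _ => 1

lemma multiplicityBound_pos (r : ℕ) : 0 < multiplicityBound r := by
  unfold multiplicityBound; split <;> norm_num

lemma multiplicityBound_eq_one {r : ℕ} (hr : r ∉ ({2, 3, 4, 5, 6, 8} : Finset ℕ)) :
    multiplicityBound r = 1 := by
  unfold multiplicityBound; split <;> simp_all

lemma factorial_mul_factorial_pow_le_factorial_mul {k : ℕ} (hk : 0 < k) {r : ℕ} (hr : 0 < r) :
    k ! * r ! ^ k ≤ (k * r)! := by
  induction r, hr using Nat.le_induction with
  | base => simp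
  | succ r _ ih =>
    calc k ! * (r + 1)! ^ k = k ! * r ! ^ k * (r + 1) ^ k := by
          rw [Nat.factorial_succ, mul_pow]; ring
      _ ≤ (k * r)! * (k * r + 1) ^ k :=
          Nat.mul_le_mul ih (Nat.pow_le_pow_left (by nlinarith) k)
      _ ≤ (k * r + k)! := Nat.factorial_mul_pow_le_factorial
      _ = (k * (r + 1))! := by rw [Nat.mul_succ]

lemma FTR_replicate (k r d : ℕ) :
    FTR (replicate k r) d =
      ((d ^ k * JC r ^ k * k ! : ℕ) : ℚ) / ((d ^ (k * r) * (k * r)! : ℕ) : ℚ) := by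
  rcases eq_or_ne k 0 with rfl | hk
  · simp [FTR]
  · simp [FTR, hk]

lemma pow_mul_le_mul_JC_of_one_le_FTR_replicate {k r X : ℕ} (hk : k ≠ 0)
    (h : 1 ≤ FTR (replicate k r) 3) (hX : k ! * X ^ k ≤ (k * r)!) : 3 ^ r * X ≤ 3 * JC r := by
  rw [FTR_replicate, one_le_div (by positivity)] at h
  have h' : 3 ^ (k * r) * (k * r)! ≤ 3 ^ k * JC r ^ k * k ! := by exact_mod_cast h
  refine (Nat.pow_le_pow_iff_left hk).1 (Nat.le_of_mul_le_mul_right ?_ (Nat.factorial_pos k))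
  calc (3 ^ r * X) ^ k * k ! = 3 ^ (k * r) * (k ! * X ^ k) := by ring
    _ ≤ 3 ^ (k * r) * (k * r)! := Nat.mul_le_mul_left _ hX
    _ ≤ (3 * JC r) ^ k * k ! := by rw [mul_pow]; exact h'

lemma three_mul_JC_lt_of_thirteen_le {r : ℕ} (hr : 13 ≤ r) : 3 * JC r < 3 ^ r * r ! := by
  obtain ⟨n, rfl⟩ := Nat.exists_eq_add_of_le' hr
  have h : 3 * (n + 14) < 3 ^ (n + 13) := by
    have := Nat.lt_pow_self (n := n + 10) (a := 3) (by norm_num)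
    rw [show 3 ^ (n + 13) = 27 * 3 ^ (n + 10) by ring]
    omega
  calc 3 * JC (n + 13) = 3 * (n + 14) * (n + 13)! := by
        rw [show JC (n + 13) = (n + 14)! from rfl, Nat.factorial_succ, mul_assoc]
    _ < 3 ^ (n + 13) * (n + 13)! := Nat.mul_lt_mul_of_pos_right h (Nat.factorial_pos _)

lemma three_mul_JC_lt_of_lt_thirteen : ∀ r < 13, 2 ≤ r → 3 * JC r < 3 ^ r * 21 ^ (r - 1) := by
  decide

lemma lt_multiplicityBound_of_one_le_FTR_three : ∀ r < 13, ∀ k < 20, 2 ≤ r →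
    1 ≤ FTR (replicate k r) 3 → k < multiplicityBound r := by
  decide +kernel

lemma lt_multiplicityBound_of_one_le_FTR {k r d : ℕ} (hd : 3 ≤ d) (hr : 2 ≤ r)
    (h : 1 ≤ FTR (replicate k r) d) : k < multiplicityBound r := by
  rcases eq_or_ne k 0 with rfl | hk
  · exact multiplicityBound_pos r
  have h₃ : 1 ≤ FTR (replicate k r) 3 :=
    h.trans (FTR_anti (card_replicate_le_sum (by omega)) (by norm_num) hd)
  have hr13 : r < 13 := by
    by_contra! hr13
    exact (three_mul_JC_lt_of_thirteen_le hr13).not_ge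
      (pow_mul_le_mul_JC_of_one_le_FTR_replicate hk h₃
        (factorial_mul_factorial_pow_le_factorial_mul (Nat.pos_of_ne_zero hk) (by omega)))
  have hk20 : k < 20 := by
    by_contra! hk20
    have hX : k ! * ((k + 1) ^ (r - 1)) ^ k ≤ (k * r)! :=
      calc k ! * ((k + 1) ^ (r - 1)) ^ k = k ! * (k + 1) ^ (k * (r - 1)) := by
            rw [← pow_mul, mul_comm (r - 1)]
        _ ≤ (k + k * (r - 1))! := Nat.factorial_mul_pow_le_factorial
        _ = (k * r)! := by
            rw [Nat.mul_sub_one, Nat.add_sub_cancel' (Nat.le_mul_of_pos_right k (by omega))]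
    have h21 := Nat.mul_le_mul_left (3 ^ r)
      (Nat.pow_le_pow_left (show 21 ≤ k + 1 by omega) (r - 1))
    linarith [pow_mul_le_mul_JC_of_one_le_FTR_replicate hk h₃ hX,
      three_mul_JC_lt_of_lt_thirteen r hr13 hr]
  exact lt_multiplicityBound_of_one_le_FTR_three r hr13 k hk20 hr h₃

lemma eq_replicate_add_of_count_lt {l : Multiset ℕ} (h : ∀ r, count r l < multiplicityBound r) :
    l = replicate (count 2 l) 2 + replicate (count 3 l) 3 + replicate (count 4 l) 4 +
      replicate (count 5 l) 5 + replicate (count 6 l) 6 + replicate (count 8 l) 8 := by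
  ext r
  by_cases hr : r ∈ ({2, 3, 4, 5, 6, 8} : Finset ℕ)
  · simp only [Finset.mem_insert, Finset.mem_singleton] at hr
    rcases hr with rfl | rfl | rfl | rfl | rfl | rfl <;> simp [count_replicate]
  · have hl : count r l = 0 := by simpa [multiplicityBound_eq_one hr] using h r
    simp only [Finset.mem_insert, Finset.mem_singleton, not_or] at hr
    simp [count_replicate, hl, eq_comm, hr]

set_option synthInstance.maxSize 1000 in
lemma dominatedByTwos_of_counts : ∀ a₂ < 14, ∀ a₃ < 4, ∀ a₄ < 4, ∀ a₅ < 2, ∀ a₆ < 3, ∀ a₈ < 2,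
    let l := replicate a₂ 2 + replicate a₃ 3 + replicate a₄ 4 + replicate a₅ 5 +
      replicate a₆ 6 + replicate a₈ 8
    DominatedByTwos l 3 ∧ (l.sum = 4 → DominatedByTwos l 4) := by
  dsimp only
  decide +kernel

lemma dominatedByTwos_of_count_lt {l : Multiset ℕ} (hl : ∀ x ∈ l, 2 ≤ x)
    (h : ∀ r, count r l < multiplicityBound r) {d : ℕ} (hd : 3 ≤ d) : DominatedByTwos l d := by
  obtain ⟨h₃, h₄⟩ := dominatedByTwos_of_counts _ (h 2) _ (h 3) _ (h 4) _ (h 5) _ (h 6) _ (h 8)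
  rw [← eq_replicate_add_of_count_lt h] at h₃ h₄
  exact h₃.of_three_of_four hl h₄ hd

theorem FTR_dominated_by_twos_general
    (d : ℕ) (hd : 3 ≤ d)
    (l₁ : Multiset ℕ)
    (hgt : ∀ x ∈ l₁, 1 < x)
    (hge : ∀ r ∈ l₁.toFinset, 1 ≤ FTR (Multiset.replicate (l₁.count r) r) d) :
    ((l₁.sum = 4 ∧ d = 3) → FTR l₁ d ≤ FTR {4} d) ∧
    ((Even l₁.sum ∧ ¬(l₁.sum = 4 ∧ d = 3)) →
      FTR l₁ d ≤ FTR (Multiset.replicate (l₁.sum / 2) 2) d) ∧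
    (Odd l₁.sum → FTR l₁ d ≤ FTR (Multiset.replicate ((l₁.sum - 1) / 2) 2) d) ∧
    (28 ≤ l₁.sum → FTR l₁ d < 1) := by
  refine dominatedByTwos_of_count_lt hgt (fun r => ?_) hd
  by_cases hr : r ∈ l₁
  · exact lt_multiplicityBound_of_one_le_FTR hd (hgt r hr) (hge r (mem_toFinset.2 hr))
  · rw [count_eq_zero.2 hr]
    exact multiplicityBound_pos r

/-- a subdegree sequence with all entries `> 1` whose isotypic pieces all
have Fermat-test ratio `≥ 1` is dominated by a sequence of `2`s (or `(4)` when
`(v,d) = (4,3)`); in particular `R(l₁,d) < 1` when the total degree is at least `28`. -/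
theorem FTR_dominated_by_twos
    (d : ℕ) (hd : 3 ≤ d)
    (l₁ : Multiset ℕ) (hl₁ : IsSubdegreeSeq l₁)
    (hgt : ∀ x ∈ l₁, 1 < x)
    (hge : ∀ r ∈ l₁.toFinset, 1 ≤ FTR (Multiset.replicate (l₁.count r) r) d) :
    ((l₁.sum = 4 ∧ d = 3) → FTR l₁ d ≤ FTR {4} d) ∧
    ((Even l₁.sum ∧ ¬(l₁.sum = 4 ∧ d = 3)) →
      FTR l₁ d ≤ FTR (Multiset.replicate (l₁.sum / 2) 2) d) ∧
    (Odd l₁.sum → FTR l₁ d ≤ FTR (Multiset.replicate ((l₁.sum - 1) / 2) 2) d) ∧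
    (28 ≤ l₁.sum → FTR l₁ d < 1) :=
  FTR_dominated_by_twos_general d hd l₁ hgt hge
end

section
/- Let m ≥ 2 and let n_1,…,n_m be positive integers. For each i, let q_i be the rational number defined by q_i = 5/2 if n_i ≥ 2 and q_i = 1 if n_i = 1. If (Π_{i=1}^m q_i·(n_i)!) / (n_1 + ⋯ + n_m)! ≥ 1, then m = 2 and n_1 = n_2 = 2. -/
/-!
Dividing by `∏ nᵢ!`, the hypothesis says that the multinomial coefficient `(n₁, …, n_m)` is at
most `∏ qᵢ`. Peeling off one part at a time, `multinomial (insert a s) = C(nₐ + Σₛ nᵢ, nₐ) ·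
multinomial s`, and the new weight `qₐ` is at most `5/6` of that binomial coefficient. For two
parts, `q₁ q₂ ≤ (25/24) C(n₁ + n₂, n₁)`, with `C(n₁ + n₂, n₁) ≤ q₁ q₂` only at `n₁ = n₂ = 2`.
Hence `∏ qᵢ ≤ (25/24) · multinomial` for all `m ≥ 2`, and for `m ≥ 3` even
`∏ qᵢ ≤ (5/6)(25/24) · multinomial < multinomial`.
-/

open Finset

lemma Nat.add_le_choose_add {a b : ℕ} (ha : 1 ≤ a) (hb : 1 ≤ b) : a + b ≤ (a + b).choose a := by
  obtain ⟨a, rfl⟩ : ∃ c, a = c + 1 := ⟨a - 1, by omega⟩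
  induction b, hb using Nat.le_induction with
  | base => simp [Nat.choose_succ_self_right]
  | succ b hb ih =>
    have hpos : 0 < (a + 1 + b).choose a := Nat.choose_pos (by omega)
    rw [← add_assoc, Nat.choose_succ_succ']
    omega

lemma Nat.multinomial_pair {α : Type*} [DecidableEq α] {a b : α} (hab : a ≠ b) (f : α → ℕ) :
    Nat.multinomial {a, b} f = (f a + f b).choose (f a) := by
  rw [Nat.multinomial_insert (by simpa), sum_singleton, Nat.multinomial_singleton, mul_one]

def weight (a : ℕ) : ℚ := if 2 ≤ a then 5 / 2 else 1

lemma weight_pos (a : ℕ) : 0 < weight a := by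
  unfold weight
  split_ifs <;> norm_num

lemma weight_le_choose {a b : ℕ} (ha : 1 ≤ a) (hb : 1 ≤ b) :
    weight a ≤ 5 / 6 * (a + b).choose a := by
  have hchoose : (a + b : ℚ) ≤ (a + b).choose a := by exact_mod_cast Nat.add_le_choose_add ha hb
  have hb' : (1 : ℚ) ≤ b := by exact_mod_cast hb
  unfold weight
  split_ifs with h2
  · have : (2 : ℚ) ≤ a := by exact_mod_cast h2
    linarith
  · have : (1 : ℚ) ≤ a := by exact_mod_cast ha
    linarith

lemma weight_mul_weight_le_choose {a b : ℕ} (ha : 1 ≤ a) (hb : 1 ≤ b) :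
    weight a * weight b ≤ 25 / 24 * (a + b).choose a := by
  rcases le_or_gt (a + b) 6 with hab | hab
  · have : a ≤ 5 := by omega
    have : b ≤ 5 := by omega
    interval_cases a <;> interval_cases b <;> norm_num [weight, Nat.choose]
  · have : (7 : ℚ) ≤ (a + b).choose a := by
      exact_mod_cast hab.trans_le (Nat.add_le_choose_add ha hb)
    unfold weight
    split_ifs <;> linarith

lemma eq_two_of_choose_le_weight_mul_weight {a b : ℕ} (ha : 1 ≤ a) (hb : 1 ≤ b)
    (h : ((a + b).choose a : ℚ) ≤ weight a * weight b) : a = 2 ∧ b = 2 := by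
  rcases le_or_gt (a + b) 6 with hab | hab
  · have : a ≤ 5 := by omega
    have : b ≤ 5 := by omega
    interval_cases a <;> interval_cases b <;> revert h <;> norm_num [weight, Nat.choose]
  · have : (7 : ℚ) ≤ (a + b).choose a := by
      exact_mod_cast hab.trans_le (Nat.add_le_choose_add ha hb)
    unfold weight at h
    split_ifs at h <;> linarith

section Multinomial

variable {ι : Type*} [DecidableEq ι] {n : ι → ℕ}

lemma prod_weight_le_multinomial {s : Finset ι} (hs : 2 ≤ #s) (hn : ∀ i ∈ s, 1 ≤ n i) :
    ∏ i ∈ s, weight (n i) ≤ 25 / 24 * Nat.multinomial s n := by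
  induction s using Finset.induction_on with
  | empty => simp at hs
  | insert a s ha ih =>
    rw [card_insert_of_notMem ha] at hs
    have hna := hn a (mem_insert_self a s)
    have hns : ∀ i ∈ s, 1 ≤ n i := fun i hi => hn i (mem_insert_of_mem hi)
    rcases (show #s = 1 ∨ 2 ≤ #s by omega) with hs_one | hs_two
    · obtain ⟨b, rfl⟩ := card_eq_one.mp hs_one
      have hab : a ≠ b := fun h => ha (h ▸ mem_singleton_self a)
      rw [prod_pair hab, Nat.multinomial_pair hab]
      exact weight_mul_weight_le_choose hna (hns b (mem_singleton_self b))
    · have hsum : #s ≤ ∑ i ∈ s, n i := by simpa using card_nsmul_le_sum s n 1 hns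
      have hC := weight_le_choose hna (by omega : 1 ≤ ∑ i ∈ s, n i)
      have hM : (0 : ℚ) < Nat.multinomial s n := by exact_mod_cast Nat.multinomial_pos s n
      rw [prod_insert ha, Nat.multinomial_insert ha, Nat.cast_mul]
      calc weight (n a) * ∏ i ∈ s, weight (n i)
          ≤ (5 / 6 * ((n a + ∑ i ∈ s, n i).choose (n a) : ℚ)) * (25 / 24 * Nat.multinomial s n) :=
            mul_le_mul hC (ih hs_two hns) (prod_nonneg fun i _ => (weight_pos _).le) (by positivity)
        _ ≤ 25 / 24 * (((n a + ∑ i ∈ s, n i).choose (n a) : ℚ) * Nat.multinomial s n) := by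
            nlinarith

lemma card_eq_two_of_multinomial_le_prod_weight {s : Finset ι} (hs : 2 ≤ #s)
    (hn : ∀ i ∈ s, 1 ≤ n i) (h : (Nat.multinomial s n : ℚ) ≤ ∏ i ∈ s, weight (n i)) :
    #s = 2 ∧ ∀ i ∈ s, n i = 2 := by
  obtain ⟨a, ha⟩ := card_pos.mp (by omega : 0 < #s)
  obtain ⟨t, hat, rfl⟩ : ∃ t, a ∉ t ∧ s = insert a t :=
    ⟨s.erase a, notMem_erase a s, (insert_erase ha).symm⟩
  rw [card_insert_of_notMem hat] at hs ⊢
  have hna := hn a (mem_insert_self a t)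
  have hnt : ∀ i ∈ t, 1 ≤ n i := fun i hi => hn i (mem_insert_of_mem hi)
  rcases (show #t = 1 ∨ 2 ≤ #t by omega) with ht | ht
  · obtain ⟨b, rfl⟩ := card_eq_one.mp ht
    have hab : a ≠ b := fun h => hat (h ▸ mem_singleton_self a)
    rw [prod_pair hab, Nat.multinomial_pair hab] at h
    obtain ⟨ha2, hb2⟩ := eq_two_of_choose_le_weight_mul_weight hna (hnt b (mem_singleton_self b)) h
    simp [ha2, hb2]
  · exfalso
    have hsum : #t ≤ ∑ i ∈ t, n i := by simpa using card_nsmul_le_sum t n 1 hnt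
    have hC := weight_le_choose hna (by omega : 1 ≤ ∑ i ∈ t, n i)
    have hP := prod_weight_le_multinomial ht hnt
    have hMt : (0 : ℚ) < Nat.multinomial t n := by exact_mod_cast Nat.multinomial_pos t n
    have hCpos : (0 : ℚ) < (n a + ∑ i ∈ t, n i).choose (n a) := by
      exact_mod_cast Nat.choose_pos (Nat.le_add_right _ _)
    rw [prod_insert hat, Nat.multinomial_insert hat, Nat.cast_mul] at h
    have hprod := mul_le_mul hC hP (prod_nonneg fun i _ => (weight_pos _).le) (by positivity)
    nlinarith

end Multinomial

/-- if `(∏ qᵢ·nᵢ!)/(n₁+⋯+n_m)! ≥ 1` with `qᵢ = 5/2` for `nᵢ ≥ 2` and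
`qᵢ = 1` for `nᵢ = 1`, then `m = 2` and all `nᵢ = 2`. -/
theorem factorial_ratio_product
    (m : ℕ) (hm : 2 ≤ m) (n : Fin m → ℕ) (hn : ∀ i, 1 ≤ n i)
    (q : Fin m → ℚ) (hq : ∀ i, q i = if 2 ≤ n i then (5 / 2 : ℚ) else 1)
    (h : 1 ≤ (∏ i, q i * (n i).factorial) / ((∑ i, n i).factorial : ℚ)) :
    m = 2 ∧ ∀ i, n i = 2 := by
  have hprod : ∏ i, q i = ∏ i, weight (n i) := prod_congr rfl fun i _ => hq i
  have hfact : (0 : ℚ) < ∏ i, ((n i).factorial : ℚ) := by positivity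
  have hM : (Nat.multinomial univ n : ℚ) ≤ ∏ i, weight (n i) := by
    rw [prod_mul_distrib, hprod, le_div_iff₀ (by positivity), one_mul, ← Nat.multinomial_spec,
      Nat.cast_mul, Nat.cast_prod, mul_comm (∏ i, weight (n i))] at h
    exact le_of_mul_le_mul_left h hfact
  obtain ⟨hcard, htwo⟩ :=
    card_eq_two_of_multinomial_le_prod_weight (by simpa using hm) (fun i _ => hn i) hM
  exact ⟨by simpa using hcard, fun i => htwo i (mem_univ i)⟩
end
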